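/- Let α, β, δ > 0 with δ < α. For every continuous f on R^{n+1}_+ and every x ∈ R^n: S_{∞,α,β}f(x) ≤ C_{n,α,β,δ} · M_β(S_{∞,δ,β}f)(x), where M_β is the non-centered Gaussian Hardy–Littlewood maximal function over β-admissible balls. -/

import Mathlib

open MeasureTheory Metric Set ENNReal

noncomputable def mCut {n : ℕ} (x : EuclideanSpace ℝ (Fin n)) : ℝ :=
  if ‖x‖ ≤ 1 then 1 else 1 / ‖x‖

noncomputable def gaussM (n : ℕ) : Measure (EuclideanSpace ℝ (Fin n)) :=
  volume.withDensity fun y => ENNReal.ofReal (Real.exp (-‖y‖ ^ 2))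

noncomputable def dtt : Measure ℝ :=
  (volume.restrict (Set.Ioi (0 : ℝ))).withDensity fun t => ENNReal.ofReal (1 / t)

noncomputable def tentMeasure (n : ℕ) : Measure (EuclideanSpace ℝ (Fin n) × ℝ) :=
  (gaussM n).prod dtt

def gaussCone {n : ℕ} (α β : ℝ) (x : EuclideanSpace ℝ (Fin n)) :
    Set (EuclideanSpace ℝ (Fin n) × ℝ) :=
  {p | 0 < p.2 ∧ dist p.1 x < min (α * p.2) (β * mCut p.1)}

def gaussTent {n : ℕ} (α β : ℝ) (B : Set (EuclideanSpace ℝ (Fin n))) :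
    Set (EuclideanSpace ℝ (Fin n) × ℝ) :=
  {p | 0 < p.2 ∧ min (α * p.2) (β * mCut p.1) ≤ Metric.infDist p.1 Bᶜ}

noncomputable def areaS {n : ℕ} (q α β : ℝ) (f : EuclideanSpace ℝ (Fin n) × ℝ → ℝ)
    (x : EuclideanSpace ℝ (Fin n)) : ℝ≥0∞ :=
  (∫⁻ p in gaussCone α β x,
      ENNReal.ofReal (|f p| ^ q) /
        gaussM n (Metric.ball p.1 (min (α * p.2) (β * mCut p.1))) ∂ tentMeasure n) ^ (1 / q)

noncomputable def areaSInf {n : ℕ} (α β : ℝ) (f : EuclideanSpace ℝ (Fin n) × ℝ → ℝ)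
    (x : EuclideanSpace ℝ (Fin n)) : ℝ≥0∞ :=
  ⨆ p ∈ gaussCone α β x, ENNReal.ofReal |f p|

lemma mCut_pos {n : ℕ} (x : EuclideanSpace ℝ (Fin n)) : 0 < mCut x := by
  unfold mCut
  split_ifs with h
  · norm_num
  · exact div_pos one_pos (lt_trans one_pos (not_le.mp h))

lemma mCut_le_one {n : ℕ} (x : EuclideanSpace ℝ (Fin n)) : mCut x ≤ 1 := by
  unfold mCut
  split_ifs with h
  · exact le_refl 1
  · rw [div_le_one (by linarith [not_le.mp h])]
    linarith [not_le.mp h]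

lemma mCut_mul_norm_le_one {n : ℕ} (x : EuclideanSpace ℝ (Fin n)) : mCut x * ‖x‖ ≤ 1 := by
  unfold mCut
  split_ifs with h
  · simpa using h
  · rw [div_mul_eq_mul_div, one_mul, div_le_one (by linarith [not_le.mp h])]

/-- On an admissible ball, the Gaussian density is comparable to its value at the center. -/
lemma gauss_density_bounds {n : ℕ} {β : ℝ} (hβ : 0 < β) {y z : EuclideanSpace ℝ (Fin n)}
    {r : ℝ} (hrβ : r ≤ β * mCut y) (hz : z ∈ ball y r) :
    Real.exp (-‖y‖ ^ 2 - (2 * β + β ^ 2)) ≤ Real.exp (-‖z‖ ^ 2) ∧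
      Real.exp (-‖z‖ ^ 2) ≤ Real.exp (-‖y‖ ^ 2 + (2 * β + β ^ 2)) := by
  have hd : dist z y < r := mem_ball.mp hz
  have h1 : |‖z‖ - ‖y‖| ≤ dist z y := abs_norm_sub_norm_le z y
  have hr0 : 0 ≤ dist z y := dist_nonneg
  have hm1 : mCut y * ‖y‖ ≤ 1 := mCut_mul_norm_le_one y
  have hm2 : mCut y ≤ 1 := mCut_le_one y
  have hm0 : 0 < mCut y := mCut_pos y
  have hy0 : 0 ≤ ‖y‖ := norm_nonneg y
  have hz0 : 0 ≤ ‖z‖ := norm_nonneg z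
  have hrb : r ≤ β := le_trans hrβ (by nlinarith)
  have hry : r * ‖y‖ ≤ β := by nlinarith
  have h2 : ‖z‖ - ‖y‖ ≤ dist z y := le_trans (le_abs_self _) h1
  have h3 : ‖y‖ - ‖z‖ ≤ dist z y := by
    rw [abs_sub_comm] at h1
    exact le_trans (le_abs_self _) h1
  have key1 : ‖z‖ ^ 2 - ‖y‖ ^ 2 ≤ 2 * β + β ^ 2 := by nlinarith
  have key2 : ‖y‖ ^ 2 - ‖z‖ ^ 2 ≤ 2 * β + β ^ 2 := by nlinarith
  constructor <;> apply Real.exp_le_exp.mpr <;> linarith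

lemma gaussM_ball_apply {n : ℕ} (y : EuclideanSpace ℝ (Fin n)) (r : ℝ) :
    gaussM n (ball y r) = ∫⁻ z in ball y r, ENNReal.ofReal (Real.exp (-‖z‖ ^ 2)) ∂volume := by
  rw [gaussM, withDensity_apply _ measurableSet_ball]

lemma gaussM_ball_upper {n : ℕ} {β : ℝ} (hβ : 0 < β) {y : EuclideanSpace ℝ (Fin n)}
    {r : ℝ} (hrβ : r ≤ β * mCut y) :
    gaussM n (ball y r) ≤
      ENNReal.ofReal (Real.exp (-‖y‖ ^ 2 + (2 * β + β ^ 2))) * volume (ball y r) := by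
  rw [gaussM_ball_apply]
  calc ∫⁻ z in ball y r, ENNReal.ofReal (Real.exp (-‖z‖ ^ 2)) ∂volume
      ≤ ∫⁻ _ in ball y r, ENNReal.ofReal (Real.exp (-‖y‖ ^ 2 + (2 * β + β ^ 2))) ∂volume := by
        apply setLIntegral_mono measurable_const
        intro z hz
        exact ENNReal.ofReal_le_ofReal (gauss_density_bounds hβ hrβ hz).2
    _ = _ := by rw [setLIntegral_const]

lemma gaussM_ball_lower {n : ℕ} {β : ℝ} (hβ : 0 < β) {y : EuclideanSpace ℝ (Fin n)}
    {r : ℝ} (hrβ : r ≤ β * mCut y) :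
    ENNReal.ofReal (Real.exp (-‖y‖ ^ 2 - (2 * β + β ^ 2))) * volume (ball y r) ≤
      gaussM n (ball y r) := by
  rw [gaussM_ball_apply]
  calc ENNReal.ofReal (Real.exp (-‖y‖ ^ 2 - (2 * β + β ^ 2))) * volume (ball y r)
      = ∫⁻ _ in ball y r, ENNReal.ofReal (Real.exp (-‖y‖ ^ 2 - (2 * β + β ^ 2))) ∂volume := by
        rw [setLIntegral_const]
    _ ≤ ∫⁻ z in ball y r, ENNReal.ofReal (Real.exp (-‖z‖ ^ 2)) ∂volume := by
        apply setLIntegral_mono (by fun_prop)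
        intro z hz
        exact ENNReal.ofReal_le_ofReal (gauss_density_bounds hβ hrβ hz).1

lemma gaussM_ball_pos {n : ℕ} {β : ℝ} (hβ : 0 < β) {y : EuclideanSpace ℝ (Fin n)}
    {r : ℝ} (hr : 0 < r) (hrβ : r ≤ β * mCut y) : 0 < gaussM n (ball y r) := by
  refine lt_of_lt_of_le ?_ (gaussM_ball_lower hβ hrβ)
  apply ENNReal.mul_pos
  · simp [Real.exp_pos]
  · exact (measure_ball_pos volume y hr).ne'

lemma gaussM_ball_ne_top {n : ℕ} {β : ℝ} (hβ : 0 < β) {y : EuclideanSpace ℝ (Fin n)}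
    {r : ℝ} (hrβ : r ≤ β * mCut y) : gaussM n (ball y r) ≠ ⊤ := by
  refine ne_top_of_le_ne_top ?_ (gaussM_ball_upper hβ hrβ)
  exact ENNReal.mul_ne_top ENNReal.ofReal_ne_top measure_ball_lt_top.ne

/-- The key comparison: the Gaussian measure of the bigger admissible ball is at most `C`
times that of the smaller one. -/
lemma gaussM_ball_ratio {n : ℕ} {β : ℝ} (hβ : 0 < β) {y : EuclideanSpace ℝ (Fin n)}
    {s ρ κ : ℝ} (hs : 0 < s) (hsρ : s ≤ ρ) (hρβ : ρ ≤ β * mCut y) (hκ : 1 ≤ κ)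
    (hρκ : ρ ≤ κ * s) :
    gaussM n (ball y ρ) ≤
      ENNReal.ofReal (Real.exp (2 * (2 * β + β ^ 2)) * κ ^ n) * gaussM n (ball y s) := by
  set K : ℝ := 2 * β + β ^ 2 with hK
  have hρ0 : 0 < ρ := lt_of_lt_of_le hs hsρ
  have hsβ : s ≤ β * mCut y := le_trans hsρ hρβ
  have hvolρ : volume (ball y ρ) = ENNReal.ofReal (ρ ^ n) *
      volume (ball (0 : EuclideanSpace ℝ (Fin n)) 1) := by
    rw [Measure.addHaar_ball_of_pos _ _ hρ0, finrank_euclideanSpace_fin]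
  have hvols : volume (ball y s) = ENNReal.ofReal (s ^ n) *
      volume (ball (0 : EuclideanSpace ℝ (Fin n)) 1) := by
    rw [Measure.addHaar_ball_of_pos _ _ hs, finrank_euclideanSpace_fin]
  have hρκn : ρ ^ n ≤ κ ^ n * s ^ n := by
    calc ρ ^ n ≤ (κ * s) ^ n := pow_le_pow_left₀ hρ0.le hρκ n
      _ = κ ^ n * s ^ n := mul_pow κ s n
  calc gaussM n (ball y ρ)
      ≤ ENNReal.ofReal (Real.exp (-‖y‖ ^ 2 + K)) * volume (ball y ρ) := gaussM_ball_upper hβ hρβ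
    _ = ENNReal.ofReal (Real.exp (-‖y‖ ^ 2 + K)) * (ENNReal.ofReal (ρ ^ n) *
          volume (ball (0 : EuclideanSpace ℝ (Fin n)) 1)) := by rw [hvolρ]
    _ ≤ ENNReal.ofReal (Real.exp (-‖y‖ ^ 2 + K)) * (ENNReal.ofReal (κ ^ n * s ^ n) *
          volume (ball (0 : EuclideanSpace ℝ (Fin n)) 1)) := by
        gcongr
    _ = ENNReal.ofReal (Real.exp (2 * K) * κ ^ n) *
          (ENNReal.ofReal (Real.exp (-‖y‖ ^ 2 - K)) * volume (ball y s)) := by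
        rw [hvols, ← mul_assoc, ← mul_assoc, ← mul_assoc,
          ← ENNReal.ofReal_mul (by positivity), ← ENNReal.ofReal_mul (by positivity),
          ← ENNReal.ofReal_mul (by positivity)]
        congr 2
        have he : Real.exp (-‖y‖ ^ 2 + K) = Real.exp (2 * K) * Real.exp (-‖y‖ ^ 2 - K) := by
          rw [← Real.exp_add]; ring_nf
        rw [he]; ring
    _ ≤ ENNReal.ofReal (Real.exp (2 * K) * κ ^ n) * gaussM n (ball y s) := by
        gcongr
        exact gaussM_ball_lower hβ hsβ

theorem stmt17 {n : ℕ} (α β δ : ℝ) (hα : 0 < α) (hβ : 0 < β) (hδ : 0 < δ) (hδα : δ < α) :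
    ∃ C : ℝ, 0 < C ∧ ∀ f : EuclideanSpace ℝ (Fin n) × ℝ → ℝ, Continuous f →
      ∀ x : EuclideanSpace ℝ (Fin n),
        areaSInf α β f x ≤ ENNReal.ofReal C *
          ⨆ (c : EuclideanSpace ℝ (Fin n)) (r : ℝ) (_ : 0 < r) (_ : r ≤ β * mCut c)
            (_ : x ∈ Metric.ball c r),
            (∫⁻ z in Metric.ball c r, areaSInf δ β f z ∂ gaussM n) /
              gaussM n (Metric.ball c r) := by
  set K : ℝ := 2 * β + β ^ 2 with hK
  set κ : ℝ := α / δ with hκdef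
  have hκ1 : 1 ≤ κ := (one_le_div hδ).mpr hδα.le
  refine ⟨Real.exp (2 * K) * κ ^ n, by positivity, fun f _ x => ?_⟩
  set C : ℝ := Real.exp (2 * K) * κ ^ n with hC
  rw [areaSInf]
  apply iSup₂_le
  rintro p ⟨ht, hd⟩
  set y := p.1 with hy
  set t := p.2 with htdef
  set ρ : ℝ := min (α * t) (β * mCut y) with hρdef
  set s : ℝ := min (δ * t) (β * mCut y) with hsdef
  have hm := mCut_pos y
  have hs0 : 0 < s := lt_min (by positivity) (by positivity)
  have hρ0 : 0 < ρ := lt_min (by positivity) (by positivity)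
  have hsρ : s ≤ ρ := min_le_min (by nlinarith) le_rfl
  have hρβ : ρ ≤ β * mCut y := min_le_right _ _
  have hρκ : ρ ≤ κ * s := by
    rcases le_total (δ * t) (β * mCut y) with h | h
    · rw [hsdef, min_eq_left h]
      calc ρ ≤ α * t := min_le_left _ _
        _ = κ * (δ * t) := by rw [hκdef]; field_simp
    · rw [hsdef, min_eq_right h]
      calc ρ ≤ β * mCut y := min_le_right _ _
        _ ≤ κ * (β * mCut y) := le_mul_of_one_le_left (by positivity) hκ1
  set Gρ := gaussM n (ball y ρ) with hGρ
  set Gs := gaussM n (ball y s) with hGs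
  have hratio : Gρ ≤ ENNReal.ofReal C * Gs := gaussM_ball_ratio hβ hs0 hsρ hρβ hκ1 hρκ
  have hGρ_pos : Gρ ≠ 0 := (gaussM_ball_pos hβ hρ0 hρβ).ne'
  have hGρ_top : Gρ ≠ ⊤ := gaussM_ball_ne_top hβ hρβ
  -- Every point of the small ball sees `p` in its `δ`-cone.
  have hcone : ∀ z ∈ ball y s, ENNReal.ofReal |f p| ≤ areaSInf δ β f z := by
    intro z hz
    have hpz : p ∈ gaussCone δ β z := by
      refine ⟨ht, ?_⟩
      have : dist y z < s := mem_ball'.mp hz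
      exact lt_of_lt_of_le this (le_refl s)
    exact le_iSup₂ (f := fun q (_ : q ∈ gaussCone δ β z) => ENNReal.ofReal |f q|) p hpz
  -- Lower bound for the integral over the small ball.
  have hint : ENNReal.ofReal |f p| * Gs ≤ ∫⁻ z in ball y ρ, areaSInf δ β f z ∂gaussM n := by
    calc ENNReal.ofReal |f p| * Gs
        = ∫⁻ _ in ball y s, ENNReal.ofReal |f p| ∂gaussM n := by rw [setLIntegral_const]
      _ = ∫⁻ z, (ball y s).indicator (fun _ => ENNReal.ofReal |f p|) z ∂gaussM n := by
          rw [lintegral_indicator measurableSet_ball]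
      _ ≤ ∫⁻ z, (ball y s).indicator (fun z => areaSInf δ β f z) z ∂gaussM n := by
          apply lintegral_mono
          intro z
          by_cases hz : z ∈ ball y s
          · rw [Set.indicator_of_mem hz, Set.indicator_of_mem hz]
            exact hcone z hz
          · rw [Set.indicator_of_notMem hz, Set.indicator_of_notMem hz]
      _ = ∫⁻ z in ball y s, areaSInf δ β f z ∂gaussM n := by
          rw [lintegral_indicator measurableSet_ball]
      _ ≤ ∫⁻ z in ball y ρ, areaSInf δ β f z ∂gaussM n := by
          exact lintegral_mono' (Measure.restrict_mono (ball_subset_ball hsρ) le_rfl) le_rfl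
  -- Choose the admissible ball `ball y ρ` in the supremum.
  have hx : x ∈ ball y ρ := by
    rw [mem_ball, dist_comm]
    exact hd
  have hsup : (∫⁻ z in ball y ρ, areaSInf δ β f z ∂gaussM n) / Gρ ≤
      ⨆ (c : EuclideanSpace ℝ (Fin n)) (r : ℝ) (_ : 0 < r) (_ : r ≤ β * mCut c)
        (_ : x ∈ Metric.ball c r),
        (∫⁻ z in Metric.ball c r, areaSInf δ β f z ∂ gaussM n) /
          gaussM n (Metric.ball c r) := by
    refine le_iSup_of_le y ?_
    refine le_iSup_of_le ρ ?_
    refine le_iSup_of_le hρ0 ?_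
    refine le_iSup_of_le hρβ ?_
    exact le_iSup_of_le hx le_rfl
  refine le_trans ?_ (mul_le_mul_right hsup (ENNReal.ofReal C))
  rw [← mul_div_assoc, ENNReal.le_div_iff_mul_le (Or.inl hGρ_pos) (Or.inl hGρ_top)]
  calc ENNReal.ofReal |f p| * Gρ
      ≤ ENNReal.ofReal |f p| * (ENNReal.ofReal C * Gs) := by gcongr
    _ = ENNReal.ofReal C * (ENNReal.ofReal |f p| * Gs) := by ring
    _ ≤ ENNReal.ofReal C * ∫⁻ z in ball y ρ, areaSInf δ β f z ∂gaussM n := by gcongr
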